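/- arXiv:2302.12146 — 6 statements merged into one kernel-verified Lean document; each statement's English description precedes it below -/
import Mathlib

section
/- Let g ≥ 2 and h ≥ 1 be integers with 2h ≤ g, let ε > 0, and let a_{2h+2}, …, a_{2g+2} be pairwise distinct complex numbers with |a_r| > ε and |a_r| > ε² for every r. Define the polynomial G(s,u,v) = (u^{2h+1} − s^{2(2h+1)}·v^{2h+1})·∏_{r=2h+2}^{2g+2}(u − a_r·v) on ℂ³. Then the set of points (s,u,v) ∈ ℂ³ with |s| ≤ ε and (u,v) ≠ (0,0) at which G and all three partial derivatives ∂G/∂s, ∂G/∂u, ∂G/∂v vanish is exactly {(0, 0, v) : v ∈ ℂ, v ≠ 0}. (Equivalently: the curve B_{h,g−h} ⊂ D_ε × ℂP¹ has exactly one singular point, namely (0,(0:1)).) -/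
/-!
On the slice `u ↦ G(s,u,v)` the polynomial factors as `P(u) · Q(u)` with
`P(u) = u^{2h+1} − (s²v)^{2h+1}` and `Q(u) = ∏ (u − a_r v)`. At a zero of `Q` we have
`u = a_r v` with `v ≠ 0`; this is a simple root of `Q` because the `a_r` are distinct, and
`P(a_r v) ≠ 0` because `|s|² ≤ ε² < |a_r|`, so `∂G/∂u ≠ 0` there. At a zero of `P` off
the zeros of `Q`, `∂G/∂u = (2h+1) u^{2h} Q(u)` forces `u = 0`, and then `P(0) = 0` forces
`s = 0`. Conversely `G(s,0,v)` and `G(0,u,v)` are divisible by `s²` and `u²`, and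
`G(0,0,v) ≡ 0`.
-/

open Finset

section

variable {𝕜 : Type*} [NontriviallyNormedField 𝕜]

theorem deriv_mul_of_left_eq_zero {f g : 𝕜 → 𝕜} {x : 𝕜} (hf : DifferentiableAt 𝕜 f x)
    (hg : DifferentiableAt 𝕜 g x) (hfx : f x = 0) :
    deriv (fun y => f y * g y) x = deriv f x * g x := by
  rw [deriv_fun_mul hf hg, hfx, zero_mul, add_zero]

theorem deriv_mul_of_right_eq_zero {f g : 𝕜 → 𝕜} {x : 𝕜} (hf : DifferentiableAt 𝕜 f x)
    (hg : DifferentiableAt 𝕜 g x) (hgx : g x = 0) :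
    deriv (fun y => f y * g y) x = f x * deriv g x := by
  rw [deriv_fun_mul hf hg, hgx, mul_zero, zero_add]

theorem deriv_pow_mul_at_zero {g : 𝕜 → 𝕜} {n : ℕ} (hn : 2 ≤ n)
    (hg : DifferentiableAt 𝕜 g 0) : deriv (fun y => y ^ n * g y) 0 = 0 := by
  rw [deriv_mul_of_left_eq_zero (f := (· ^ n)) (by fun_prop) hg (zero_pow (by omega)),
    deriv_pow_field, zero_pow (by omega), mul_zero, zero_mul]

theorem deriv_prod_sub_ne_zero {ι : Type*} {S : Finset ι} {c : ι → 𝕜}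
    (hc : Set.InjOn c S) {r : ι} (hr : r ∈ S) :
    deriv (fun x => ∏ j ∈ S, (x - c j)) (c r) ≠ 0 := by
  classical
  have hsplit : (fun x => ∏ j ∈ S, (x - c j)) =
      fun x => (x - c r) * ∏ j ∈ S.erase r, (x - c j) :=
    funext fun x => (mul_prod_erase S _ hr).symm
  rw [hsplit, deriv_mul_of_left_eq_zero (by fun_prop) (by fun_prop) (sub_self _),
    deriv_sub_const, deriv_id'', one_mul, prod_ne_zero_iff]
  intro j hj
  exact sub_ne_zero.2 fun h =>
    ne_of_mem_erase hj (hc (mem_of_mem_erase hj) hr h.symm)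

theorem deriv_mul_prod_sub_ne_zero {ι : Type*} {S : Finset ι} {c : ι → 𝕜}
    (hc : Set.InjOn c S) {r : ι} (hr : r ∈ S) {p : 𝕜 → 𝕜}
    (hp : DifferentiableAt 𝕜 p (c r)) (hpr : p (c r) ≠ 0) :
    deriv (fun x => p x * ∏ j ∈ S, (x - c j)) (c r) ≠ 0 := by
  rw [deriv_mul_of_right_eq_zero hp (by fun_prop) (prod_eq_zero hr (sub_self _))]
  exact mul_ne_zero hpr (deriv_prod_sub_ne_zero hc hr)

theorem eq_zero_of_deriv_pow_sub_mul_eq_zero [CharZero 𝕜] {q : 𝕜 → 𝕜} {b x : 𝕜}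
    {n : ℕ} (hn : 2 ≤ n) (hq : DifferentiableAt 𝕜 q x) (hqx : q x ≠ 0) (hx : x ^ n = b)
    (hd : deriv (fun y => (y ^ n - b) * q y) x = 0) : x = 0 := by
  rw [deriv_mul_of_left_eq_zero (f := (· ^ n - b)) (by fun_prop) hq (sub_eq_zero.2 hx),
    deriv_sub_const, deriv_pow_field] at hd
  simpa [hqx, show n ≠ 0 by omega, show n - 1 ≠ 0 by omega] using hd

theorem pow_ne_pow_of_norm_lt {x y : 𝕜} (h : ‖x‖ < ‖y‖) {n : ℕ} (hn : n ≠ 0) :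
    x ^ n ≠ y ^ n := fun heq =>
  (pow_lt_pow_left₀ h (norm_nonneg x) hn).ne (by rw [← norm_pow, ← norm_pow, heq])

theorem deriv_pow_sub_mul_prod_ne_zero {ι : Type*} {S : Finset ι} {a : ι → 𝕜}
    (ha : Set.InjOn a S) {r : ι} (hr : r ∈ S) {t v : 𝕜} (hv : v ≠ 0)
    (hta : ‖t‖ < ‖a r‖) {n : ℕ} (hn : n ≠ 0) :
    deriv (fun u => (u ^ n - (t * v) ^ n) * ∏ j ∈ S, (u - a j * v)) (a r * v) ≠ 0 := by
  have htv : ‖t * v‖ < ‖a r * v‖ := by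
    rw [norm_mul, norm_mul]
    gcongr
  exact deriv_mul_prod_sub_ne_zero (c := (a · * v)) (p := (· ^ n - (t * v) ^ n))
    (fun i hi j hj hij => ha hi hj (mul_right_cancel₀ hv hij)) hr (by fun_prop)
    (sub_ne_zero.2 (pow_ne_pow_of_norm_lt htv hn).symm)

variable {ι : Type*} (n : ℕ) (S : Finset ι) (a : ι → 𝕜)

def branchCurvePoly (s u v : 𝕜) : 𝕜 :=
  (u ^ n - (s ^ 2 * v) ^ n) * ∏ j ∈ S, (u - a j * v)

variable {n S a}

theorem eq_zero_of_branchCurvePoly_critical [CharZero 𝕜] (hn : 2 ≤ n) (ha : Set.InjOn a S)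
    {s u v : 𝕜} (hs : ∀ r ∈ S, ‖s‖ ^ 2 < ‖a r‖) (huv : ¬(u = 0 ∧ v = 0))
    (hzero : branchCurvePoly n S a s u v = 0)
    (hdu : deriv (fun u' => branchCurvePoly n S a s u' v) u = 0) : s = 0 ∧ u = 0 := by
  unfold branchCurvePoly at hzero hdu
  by_cases hQ : ∏ j ∈ S, (u - a j * v) = 0
  · obtain ⟨r, hr, hur⟩ := prod_eq_zero_iff.1 hQ
    rw [sub_eq_zero] at hur
    subst hur
    have hv : v ≠ 0 := by rintro rfl; simp at huv
    exact absurd hdu (deriv_pow_sub_mul_prod_ne_zero ha hr hv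
      (by rw [norm_pow]; exact hs r hr) (by omega))
  · rw [mul_eq_zero, or_iff_left hQ, sub_eq_zero] at hzero
    obtain rfl := eq_zero_of_deriv_pow_sub_mul_eq_zero hn (by fun_prop) hQ hzero hdu
    have hv : v ≠ 0 := fun hv => huv ⟨rfl, hv⟩
    have hs2v : s ^ 2 * v = 0 :=
      pow_eq_zero_iff (by omega) |>.1 (hzero.symm.trans (zero_pow (by omega)))
    exact ⟨by simpa [hv] using hs2v, rfl⟩

theorem branchCurvePoly_zero_zero (hn : n ≠ 0) (v : 𝕜) :
    branchCurvePoly n S a 0 0 v = 0 := by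
  simp [branchCurvePoly, hn]

theorem deriv_branchCurvePoly_left_zero (hn : n ≠ 0) (v : 𝕜) :
    deriv (fun s => branchCurvePoly n S a s 0 v) 0 = 0 := by
  have hpoly : (fun s => branchCurvePoly n S a s 0 v) =
      fun s => s ^ (2 * n) * -(v ^ n * ∏ j ∈ S, (0 - a j * v)) :=
    funext fun s => by simp only [branchCurvePoly, zero_pow hn]; ring
  rw [hpoly]
  exact deriv_pow_mul_at_zero (by omega) (by fun_prop)

theorem deriv_branchCurvePoly_middle_zero (hn : 2 ≤ n) (v : 𝕜) :
    deriv (fun u => branchCurvePoly n S a 0 u v) 0 = 0 := by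
  have hpoly : (fun u => branchCurvePoly n S a 0 u v) =
      fun u => u ^ n * ∏ j ∈ S, (u - a j * v) :=
    funext fun u => by simp [branchCurvePoly, show n ≠ 0 by omega]
  rw [hpoly]
  exact deriv_pow_mul_at_zero hn (by fun_prop)

end

theorem stmt_1_general (g h : ℕ) (hh : 1 ≤ h)
    (ε : ℝ) (hε : 0 < ε) (a : ℕ → ℂ)
    (ha_inj : Set.InjOn a ↑(Finset.Icc (2 * h + 2) (2 * g + 2)))
    (ha_abs2 : ∀ r ∈ Finset.Icc (2 * h + 2) (2 * g + 2), ε ^ 2 < ‖a r‖)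
    (G : ℂ → ℂ → ℂ → ℂ)
    (hG : ∀ s u v, G s u v =
      (u ^ (2 * h + 1) - s ^ (2 * (2 * h + 1)) * v ^ (2 * h + 1)) *
        ∏ r ∈ Finset.Icc (2 * h + 2) (2 * g + 2), (u - a r * v)) :
    ∀ s u v : ℂ,
      (‖s‖ ≤ ε ∧ ¬(u = 0 ∧ v = 0) ∧ G s u v = 0 ∧
        deriv (fun s' => G s' u v) s = 0 ∧ deriv (fun u' => G s u' v) u = 0 ∧
        deriv (fun v' => G s u v') v = 0) ↔ (s = 0 ∧ u = 0 ∧ v ≠ 0) := by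
  obtain rfl : G = branchCurvePoly (2 * h + 1) (Icc (2 * h + 2) (2 * g + 2)) a :=
    funext fun s => funext fun u => funext fun v => by rw [hG, branchCurvePoly]; ring
  intro s u v
  constructor
  · rintro ⟨hs, huv, hzero, -, hdu, -⟩
    obtain ⟨rfl, rfl⟩ := eq_zero_of_branchCurvePoly_critical (by omega) ha_inj
      (fun r hr => (pow_le_pow_left₀ (norm_nonneg s) hs 2).trans_lt (ha_abs2 r hr))
      huv hzero hdu
    exact ⟨rfl, rfl, fun hv => huv ⟨rfl, hv⟩⟩
  · rintro ⟨rfl, rfl, hv⟩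
    refine ⟨by simpa using hε.le, fun h => hv h.2, branchCurvePoly_zero_zero (by omega) v,
      deriv_branchCurvePoly_left_zero (by omega) v,
      deriv_branchCurvePoly_middle_zero (by omega) v, ?_⟩
    simp only [branchCurvePoly_zero_zero (by omega : 2 * h + 1 ≠ 0), deriv_const']

/-- The branch curve `B_{h,g−h} ⊂ D_ε × ℂP¹` cut out by
`(u^{2h+1} − s^{2(2h+1)} v^{2h+1})·∏_{r=2h+2}^{2g+2}(u − a_r v) = 0` has exactly
one singular point, namely `(0,(0:1))`: the critical zeros of the defining
polynomial with `|s| ≤ ε` and `(u,v) ≠ (0,0)` are exactly the points `(0,0,v)`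
with `v ≠ 0`. -/
theorem stmt_1 (g h : ℕ) (hg : 2 ≤ g) (hh : 1 ≤ h) (hhg : 2 * h ≤ g)
    (ε : ℝ) (hε : 0 < ε) (a : ℕ → ℂ)
    (ha_inj : Set.InjOn a ↑(Finset.Icc (2 * h + 2) (2 * g + 2)))
    (ha_abs : ∀ r ∈ Finset.Icc (2 * h + 2) (2 * g + 2), ε < ‖a r‖)
    (ha_abs2 : ∀ r ∈ Finset.Icc (2 * h + 2) (2 * g + 2), ε ^ 2 < ‖a r‖)
    (G : ℂ → ℂ → ℂ → ℂ)
    (hG : ∀ s u v, G s u v =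
      (u ^ (2 * h + 1) - s ^ (2 * (2 * h + 1)) * v ^ (2 * h + 1)) *
        ∏ r ∈ Finset.Icc (2 * h + 2) (2 * g + 2), (u - a r * v)) :
    ∀ s u v : ℂ,
      (‖s‖ ≤ ε ∧ ¬(u = 0 ∧ v = 0) ∧ G s u v = 0 ∧
        deriv (fun s' => G s' u v) s = 0 ∧ deriv (fun u' => G s u' v) u = 0 ∧
        deriv (fun v' => G s u v') v = 0) ↔ (s = 0 ∧ u = 0 ∧ v ≠ 0) :=
  stmt_1_general g h hh ε hε a ha_inj ha_abs2 G hG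
end

section
/- Let g ≥ 2 be an integer, let ε > 0, and let a₃, …, a_{2g+2} be pairwise distinct complex numbers with |a_r| > ε and |a_r|² > ε for every r. Define the polynomial F(s,x,y,z) = (x² − s·z²)·∏_{r=3}^{2g+2}(x − a_r·z) − y²·z^{2g} on ℂ⁴. Then the set of points (s,x,y,z) with |s| ≤ ε and (x,y,z) ≠ (0,0,0) at which F and all four partial derivatives ∂F/∂s, ∂F/∂x, ∂F/∂y, ∂F/∂z vanish is exactly {(s, 0, y, 0) : |s| ≤ ε, y ∈ ℂ, y ≠ 0}. (Equivalently: the singular locus of Y_irr^{(0)} ⊂ D_ε × ℂP² is D_ε × {(0:1:0)}.) -/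
/-!
Away from `z = 0` there is no critical zero at all: `∂F/∂s = -z² ∏ (x - a_r z)` forces
`x = a_r z` for some `r`, and there `∂F/∂x = (a_r² - s) z² ∏_{j ≠ r} (a_r - a_j) z`, which is
nonzero since the `a_j` are distinct and `|a_r|² > ε ≥ |s|`. On `z = 0` the equation reduces to
`x^(2g+2) = 0`, and at `(s, 0, y, 0)` every partial vanishes because `F(s, 0, y, ·)` is divisible
by `z²`.
-/

open Finset

section

variable {𝕜 : Type*} [NontriviallyNormedField 𝕜]

def IsCriticalZero (F : 𝕜 → 𝕜 → 𝕜 → 𝕜 → 𝕜) (s x y z : 𝕜) : Prop :=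
  F s x y z = 0 ∧ deriv (fun s' => F s' x y z) s = 0 ∧ deriv (fun x' => F s x' y z) x = 0 ∧
    deriv (fun y' => F s x y' z) y = 0 ∧ deriv (fun z' => F s x y z') z = 0

variable {ι : Type*}

theorem hasDerivAt_prod_sub_of_mem [DecidableEq ι] (S : Finset ι) (c : ι → 𝕜) {r : ι}
    (hr : r ∈ S) :
    HasDerivAt (fun x => ∏ j ∈ S, (x - c j)) (∏ j ∈ S.erase r, (c r - c j)) (c r) := by
  have hQ : DifferentiableAt 𝕜 (fun x => ∏ j ∈ S.erase r, (x - c j)) (c r) := by fun_prop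
  have hprod := ((hasDerivAt_id (c r)).sub_const (c r)).fun_mul hQ.hasDerivAt
  simp only [id, sub_self, one_mul, zero_mul, add_zero] at hprod
  rw [funext fun x => (mul_prod_erase S (fun j => x - c j) hr).symm]
  exact hprod

theorem prod_erase_sub_ne_zero [DecidableEq ι] {S : Finset ι} {c : ι → 𝕜}
    (hc : Set.InjOn c S) {r : ι} (hr : r ∈ S) : ∏ j ∈ S.erase r, (c r - c j) ≠ 0 := by
  refine prod_ne_zero_iff.mpr fun j hj => sub_ne_zero.mpr fun h => ?_
  exact (ne_of_mem_erase hj) (hc hr (mem_of_mem_erase hj) h).symm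

def coverPoly (a : ι → 𝕜) (S : Finset ι) (n : ℕ) (s x y z : 𝕜) : 𝕜 :=
  (x ^ 2 - s * z ^ 2) * ∏ r ∈ S, (x - a r * z) - y ^ 2 * z ^ n

variable (a : ι → 𝕜) (S : Finset ι) (n : ℕ)

theorem hasDerivAt_coverPoly_s (s x y z : 𝕜) :
    HasDerivAt (fun s' => coverPoly a S n s' x y z) (-z ^ 2 * ∏ r ∈ S, (x - a r * z)) s := by
  have := (((hasDerivAt_id s).mul_const (z ^ 2)).const_sub (x ^ 2)).mul_const
    (∏ r ∈ S, (x - a r * z)) |>.sub_const (y ^ 2 * z ^ n)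
  simpa [coverPoly] using this

theorem hasDerivAt_coverPoly_x_of_mem [DecidableEq ι] {r : ι} (hr : r ∈ S) (s y z : 𝕜) :
    HasDerivAt (fun x' => coverPoly a S n s x' y z)
      (((a r * z) ^ 2 - s * z ^ 2) * ∏ j ∈ S.erase r, (a r * z - a j * z)) (a r * z) := by
  have := (((hasDerivAt_pow 2 (a r * z)).sub_const (s * z ^ 2)).mul
    (hasDerivAt_prod_sub_of_mem S (fun j => a j * z) hr)).sub_const (y ^ 2 * z ^ n)
  rwa [prod_eq_zero hr (sub_self _), mul_zero, zero_add] at this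

theorem coverPoly_apply_zero (hn : n ≠ 0) (s x y : 𝕜) :
    coverPoly a S n s x y 0 = x ^ (#S + 2) := by
  simp [coverPoly, zero_pow hn, pow_add, mul_comm]

theorem hasDerivAt_coverPoly_z_zero (hn : 2 ≤ n) (s y : 𝕜) :
    HasDerivAt (fun z' => coverPoly a S n s 0 y z') 0 0 := by
  let h : 𝕜 → 𝕜 := fun z => -(s * ∏ r ∈ S, (0 - a r * z)) - y ^ 2 * z ^ (n - 2)
  have hfac : (fun z' => coverPoly a S n s 0 y z') = fun z => z ^ 2 * h z := by
    funext z
    rw [coverPoly, ← Nat.add_sub_of_le hn, pow_add]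
    ring
  have hh : DifferentiableAt 𝕜 h 0 := by fun_prop
  simpa [hfac] using (hasDerivAt_pow 2 (0 : 𝕜)).fun_mul hh.hasDerivAt

variable {a S n}

theorem not_isCriticalZero_coverPoly [DecidableEq ι] (ha : Set.InjOn a S) {s : 𝕜}
    (hs : ∀ r ∈ S, a r ^ 2 ≠ s) {x y z : 𝕜} (hz : z ≠ 0) :
    ¬IsCriticalZero (coverPoly a S n) s x y z := by
  rintro ⟨-, hds, hdx, -⟩
  rw [(hasDerivAt_coverPoly_s a S n s x y z).deriv, mul_eq_zero,
    or_iff_right (neg_ne_zero.mpr (pow_ne_zero 2 hz))] at hds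
  obtain ⟨r, hr, hxr⟩ := prod_eq_zero_iff.mp hds
  obtain rfl : x = a r * z := sub_eq_zero.mp hxr
  rw [(hasDerivAt_coverPoly_x_of_mem a S n hr s y z).deriv] at hdx
  refine mul_ne_zero ?_ (prod_erase_sub_ne_zero ((mul_left_injective₀ hz).comp_injOn ha) hr) hdx
  rw [mul_pow, ← sub_mul]
  exact mul_ne_zero (sub_ne_zero.mpr (hs r hr)) (pow_ne_zero 2 hz)

theorem isCriticalZero_coverPoly_iff [DecidableEq ι] (ha : Set.InjOn a S) {s : 𝕜}
    (hs : ∀ r ∈ S, a r ^ 2 ≠ s) (hn : 2 ≤ n) {x y z : 𝕜} :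
    ¬(x = 0 ∧ y = 0 ∧ z = 0) ∧ IsCriticalZero (coverPoly a S n) s x y z ↔
      x = 0 ∧ z = 0 ∧ y ≠ 0 := by
  have hn0 : n ≠ 0 := by omega
  constructor
  · rintro ⟨hxyz, hcrit⟩
    obtain rfl : z = 0 := by
      by_contra hz
      exact not_isCriticalZero_coverPoly ha hs hz hcrit
    obtain rfl : x = 0 := by
      have := hcrit.1
      rw [coverPoly_apply_zero a S n hn0] at this
      exact pow_eq_zero_iff (by omega) |>.mp this
    exact ⟨rfl, rfl, fun hy => hxyz ⟨rfl, hy, rfl⟩⟩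
  · rintro ⟨rfl, rfl, hy⟩
    refine ⟨fun h => hy h.2.1, ?_, ?_, ?_, ?_,
      (hasDerivAt_coverPoly_z_zero a S n hn s y).deriv⟩ <;>
      simp [coverPoly_apply_zero a S n hn0]

end

theorem stmt_2_general (g : ℕ) (hg : 2 ≤ g) (ε : ℝ) (a : ℕ → ℂ)
    (ha_inj : Set.InjOn a ↑(Finset.Icc 3 (2 * g + 2)))
    (ha_abs2 : ∀ r ∈ Finset.Icc 3 (2 * g + 2), ε < ‖a r‖ ^ 2)
    (F : ℂ → ℂ → ℂ → ℂ → ℂ)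
    (hF : ∀ s x y z, F s x y z =
      (x ^ 2 - s * z ^ 2) * (∏ r ∈ Finset.Icc 3 (2 * g + 2), (x - a r * z)) -
        y ^ 2 * z ^ (2 * g)) :
    ∀ s x y z : ℂ,
      (‖s‖ ≤ ε ∧ ¬(x = 0 ∧ y = 0 ∧ z = 0) ∧ F s x y z = 0 ∧
        deriv (fun s' => F s' x y z) s = 0 ∧ deriv (fun x' => F s x' y z) x = 0 ∧
        deriv (fun y' => F s x y' z) y = 0 ∧ deriv (fun z' => F s x y z') z = 0) ↔
      (‖s‖ ≤ ε ∧ x = 0 ∧ z = 0 ∧ y ≠ 0) := by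
  intro s x y z
  obtain rfl : F = coverPoly a (Finset.Icc 3 (2 * g + 2)) (2 * g) := by
    funext s x y z
    exact hF s x y z
  refine and_congr_right fun hs => isCriticalZero_coverPoly_iff ha_inj ?_ (by omega)
  intro r hr hrs
  have := ha_abs2 r hr
  rw [← norm_pow, hrs] at this
  linarith

/-- The singular locus of the local model `Y_irr^{(0)} ⊂ D_ε × ℂP²`, cut out by
`(x² − s z²)·∏_{r=3}^{2g+2}(x − a_r z) − y² z^{2g} = 0`, is `D_ε × {(0:1:0)}`:
the critical zeros with `|s| ≤ ε` and `(x,y,z) ≠ (0,0,0)` are exactly the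
points `(s,0,y,0)` with `|s| ≤ ε` and `y ≠ 0`. -/
theorem stmt_2 (g : ℕ) (hg : 2 ≤ g) (ε : ℝ) (hε : 0 < ε) (a : ℕ → ℂ)
    (ha_inj : Set.InjOn a ↑(Finset.Icc 3 (2 * g + 2)))
    (ha_abs : ∀ r ∈ Finset.Icc 3 (2 * g + 2), ε < ‖a r‖)
    (ha_abs2 : ∀ r ∈ Finset.Icc 3 (2 * g + 2), ε < ‖a r‖ ^ 2)
    (F : ℂ → ℂ → ℂ → ℂ → ℂ)
    (hF : ∀ s x y z, F s x y z =
      (x ^ 2 - s * z ^ 2) * (∏ r ∈ Finset.Icc 3 (2 * g + 2), (x - a r * z)) -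
        y ^ 2 * z ^ (2 * g)) :
    ∀ s x y z : ℂ,
      (‖s‖ ≤ ε ∧ ¬(x = 0 ∧ y = 0 ∧ z = 0) ∧ F s x y z = 0 ∧
        deriv (fun s' => F s' x y z) s = 0 ∧ deriv (fun x' => F s x' y z) x = 0 ∧
        deriv (fun y' => F s x y' z) y = 0 ∧ deriv (fun z' => F s x y z') z = 0) ↔
      (‖s‖ ≤ ε ∧ x = 0 ∧ z = 0 ∧ y ≠ 0) :=
  stmt_2_general g hg ε a ha_inj ha_abs2 F hF
end

section
/- Let h ≥ 1 and m ≥ 0 be integers, let δ > 0, and let a_{2h+2}, …, a_{2g+2} (for some integer g with 2h ≤ g) be pairwise distinct complex numbers with |a_r| > δ² for every r. Define the polynomial Q_m(t,u,v) = t^{2m}·(u^{2h+1} − 1)·∏_{r=2h+2}^{2g+2}(t²·u − a_r) − v² on ℂ³. Then: (i) if m ≥ 1, the set of points (t,u,v) with |t| ≤ δ at which Q_m and all three partial derivatives ∂Q_m/∂t, ∂Q_m/∂u, ∂Q_m/∂v vanish is exactly {(0, u, 0) : u ∈ ℂ}; (ii) if m = 0, there is no point (t,u,v) with |t| ≤ δ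 at which Q₀ and all three of its partial derivatives vanish. -/
/-!
With `v = 0` forced by `∂Q/∂v = -2v`, a critical zero is a zero of `t^{2m} P_t(u)` where
`P_t(u) = (u^{2h+1} - 1) ∏ (t²u - a_r)`, at which `t^{2m} P_t'(u)` vanishes too. For `|t| ≤ δ`
every zero of `P_t` is simple: a root of unity `u` has `|t²u| ≤ δ² < |a_r|`, so the product does
not vanish there, while a zero `t²u = a_{r₀}` of the product is a simple one (the `a_r` are
distinct) and has `|u| > 1`, so `u^{2h+1} ≠ 1`. Hence `t^{2m} = 0`, which is impossible for
`m = 0` and means `t = 0` for `m ≥ 1`; conversely `t^{2m}` vanishes to order `≥ 2` at `t = 0`.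
-/

open Finset

theorem HasDerivAt.mul_of_left_eq_zero {𝕜 : Type*} [NontriviallyNormedField 𝕜] {f g : 𝕜 → 𝕜}
    {f' g' x : 𝕜} (hf : HasDerivAt f f' x) (hg : HasDerivAt g g' x) (hfx : f x = 0) :
    HasDerivAt (fun y => f y * g y) (f' * g x) x := by
  simpa [hfx] using hf.fun_mul hg

theorem deriv_pow_mul_at_zero_s8 {𝕜 : Type*} [NontriviallyNormedField 𝕜] {G : 𝕜 → 𝕜} {k : ℕ}
    (hk : 2 ≤ k) (hG : DifferentiableAt 𝕜 G 0) : deriv (fun t => t ^ k * G t) 0 = 0 := by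
  have h := (hasDerivAt_pow k (0 : 𝕜)).mul_of_left_eq_zero hG.hasDerivAt (zero_pow (by omega))
  rw [h.deriv, zero_pow (by omega)]
  simp

theorem deriv_const_sub_sq {𝕜 : Type*} [NontriviallyNormedField 𝕜] (c v : 𝕜) :
    deriv (fun v' => c - v' ^ 2) v = -(2 * v) := by
  simp

section ModelPoly

variable {ι : Type*} (n : ℕ) (s : Finset ι) (a : ι → ℂ)

/-- With `c = t²`, `n = 2h+1` and `s = [2h+2, 2g+2]`, this is `Q_m(t,u,0) / t^{2m}`. -/
def modelPoly (c u : ℂ) : ℂ := (u ^ n - 1) * ∏ r ∈ s, (c * u - a r)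

variable {n s a}

theorem hasDerivAt_modelPoly_of_pow_eq_one {c u : ℂ} (hu : u ^ n = 1) :
    HasDerivAt (modelPoly n s a c) (n * u ^ (n - 1) * ∏ r ∈ s, (c * u - a r)) u := by
  have hprod : Differentiable ℂ fun u : ℂ => ∏ r ∈ s, (c * u - a r) := by fun_prop
  exact ((hasDerivAt_pow n u).sub_const 1).mul_of_left_eq_zero
    (hprod u).hasDerivAt (sub_eq_zero.2 hu)

theorem hasDerivAt_modelPoly_of_mul_eq [DecidableEq ι] {c u : ℂ} {r₀ : ι} (hr₀ : r₀ ∈ s)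
    (hu : c * u = a r₀) :
    HasDerivAt (modelPoly n s a c) (c * ((u ^ n - 1) * ∏ r ∈ s.erase r₀, (c * u - a r))) u := by
  have hsplit : modelPoly n s a c =
      fun u => (c * u - a r₀) * ((u ^ n - 1) * ∏ r ∈ s.erase r₀, (c * u - a r)) := by
    funext u
    rw [modelPoly, ← mul_prod_erase s _ hr₀]
    ring
  have hrest : Differentiable ℂ fun u : ℂ => (u ^ n - 1) * ∏ r ∈ s.erase r₀, (c * u - a r) := by
    fun_prop
  rw [hsplit]
  simpa using ((hasDerivAt_id u).const_mul c |>.sub_const (a r₀)).mul_of_left_eq_zero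
    (hrest u).hasDerivAt (sub_eq_zero.2 hu)

theorem prod_sub_ne_zero_of_norm_lt {z : ℂ} (hz : ∀ r ∈ s, ‖z‖ < ‖a r‖) :
    ∏ r ∈ s, (z - a r) ≠ 0 :=
  prod_ne_zero_iff.2 fun r hr h => (hz r hr).ne (by rw [sub_eq_zero.1 h])

theorem deriv_modelPoly_ne_zero (hn : n ≠ 0) (ha : Set.InjOn a s) {c u : ℂ}
    (hc : ∀ r ∈ s, ‖c‖ < ‖a r‖) (hu : modelPoly n s a c u = 0) :
    deriv (modelPoly n s a c) u ≠ 0 := by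
  classical
  rcases mul_eq_zero.1 hu with h1 | hprod
  · have hu1 : u ^ n = 1 := sub_eq_zero.1 h1
    have hnorm : ‖u‖ = 1 := Complex.norm_eq_one_of_pow_eq_one hu1 hn
    have hu0 : u ≠ 0 := norm_ne_zero_iff.1 (by simp [hnorm])
    rw [(hasDerivAt_modelPoly_of_pow_eq_one hu1).deriv]
    exact mul_ne_zero (mul_ne_zero (Nat.cast_ne_zero.2 hn) (pow_ne_zero _ hu0))
      (prod_sub_ne_zero_of_norm_lt (by simpa [hnorm] using hc))
  · obtain ⟨r₀, hr₀, h0⟩ := prod_eq_zero_iff.1 hprod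
    have hu0 : c * u = a r₀ := sub_eq_zero.1 h0
    have hlt : ‖c‖ * 1 < ‖c‖ * ‖u‖ := by simpa [← norm_mul, hu0] using hc r₀ hr₀
    have hc0 : c ≠ 0 := by rintro rfl; simp at hlt
    have hunit : u ^ n ≠ 1 := fun h =>
      (lt_of_mul_lt_mul_left hlt (norm_nonneg c)).ne' (Complex.norm_eq_one_of_pow_eq_one h hn)
    rw [(hasDerivAt_modelPoly_of_mul_eq hr₀ hu0).deriv]
    refine mul_ne_zero hc0 (mul_ne_zero (sub_ne_zero.2 hunit) (prod_ne_zero_iff.2 ?_))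
    intro r hr h
    obtain ⟨hne, hrs⟩ := mem_erase.1 hr
    exact hne (ha hrs hr₀ (by rw [← sub_eq_zero.1 h, hu0]))

end ModelPoly

theorem eq_zero_of_critical {M : ℂ → ℂ} {p u v : ℂ} (hsimple : M u = 0 → deriv M u ≠ 0)
    (h0 : p * M u - v ^ 2 = 0) (hu : deriv (fun u' => p * M u' - v ^ 2) u = 0)
    (hv : deriv (fun v' => p * M u - v' ^ 2) v = 0) : p = 0 ∧ v = 0 := by
  obtain rfl : v = 0 := by simpa [deriv_const_sub_sq] using hv
  rw [deriv_sub_const, deriv_const_mul_field] at hu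
  refine ⟨by_contra fun hp => ?_, rfl⟩
  rw [zero_pow two_ne_zero, sub_zero] at h0
  exact hsimple ((mul_eq_zero.1 h0).resolve_left hp) ((mul_eq_zero.1 hu).resolve_left hp)

theorem stmt_8_general (h g m : ℕ)
    (δ : ℝ) (hδ : 0 < δ) (a : ℕ → ℂ)
    (ha_inj : Set.InjOn a ↑(Finset.Icc (2 * h + 2) (2 * g + 2)))
    (ha_abs : ∀ r ∈ Finset.Icc (2 * h + 2) (2 * g + 2), δ ^ 2 < ‖a r‖)
    (Q : ℂ → ℂ → ℂ → ℂ)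
    (hQ : ∀ t u v, Q t u v =
      t ^ (2 * m) * (u ^ (2 * h + 1) - 1) *
        (∏ r ∈ Finset.Icc (2 * h + 2) (2 * g + 2), (t ^ 2 * u - a r)) - v ^ 2) :
    (1 ≤ m → ∀ t u v : ℂ,
      (‖t‖ ≤ δ ∧ Q t u v = 0 ∧ deriv (fun t' => Q t' u v) t = 0 ∧
        deriv (fun u' => Q t u' v) u = 0 ∧ deriv (fun v' => Q t u v') v = 0) ↔
      (t = 0 ∧ v = 0)) ∧
    (m = 0 → ∀ t u v : ℂ, ‖t‖ ≤ δ →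
      ¬(Q t u v = 0 ∧ deriv (fun t' => Q t' u v) t = 0 ∧
        deriv (fun u' => Q t u' v) u = 0 ∧ deriv (fun v' => Q t u v') v = 0)) := by
  set s := Finset.Icc (2 * h + 2) (2 * g + 2)
  obtain rfl : Q = fun t u v => t ^ (2 * m) * modelPoly (2 * h + 1) s a (t ^ 2) u - v ^ 2 := by
    funext t u v
    rw [hQ, modelPoly]
    ring
  have hsimple (t u : ℂ) (ht : ‖t‖ ≤ δ) :
      modelPoly (2 * h + 1) s a (t ^ 2) u = 0 → deriv (modelPoly (2 * h + 1) s a (t ^ 2)) u ≠ 0 :=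
    deriv_modelPoly_ne_zero (Nat.succ_ne_zero _) ha_inj
      fun r hr => (norm_pow t 2 ▸ pow_le_pow_left₀ (norm_nonneg t) ht 2).trans_lt (ha_abs r hr)
  beta_reduce
  refine ⟨fun hm t u v => ⟨fun ⟨ht, h0, _, hu, hv⟩ => ?_, ?_⟩,
    fun hm t u v ht ⟨h0, _, hu, hv⟩ => ?_⟩
  · obtain ⟨htm, rfl⟩ := eq_zero_of_critical (hsimple t u ht) h0 hu hv
    exact ⟨eq_zero_of_pow_eq_zero htm, rfl⟩
  · rintro ⟨rfl, rfl⟩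
    have h0m : (0 : ℂ) ^ (2 * m) = 0 := zero_pow (by omega)
    refine ⟨by simpa using hδ.le, by simp [h0m], ?_, by simp [h0m],
      (deriv_const_sub_sq _ _).trans (by simp)⟩
    rw [deriv_sub_const, deriv_pow_mul_at_zero_s8 (by omega) (by unfold modelPoly; fun_prop)]
  · subst hm
    simpa using (eq_zero_of_critical (hsimple t u ht) h0 hu hv).1

/-- The inductive claim governing the resolution of the reducible local model:
for `Q_m(t,u,v) = t^{2m}(u^{2h+1} − 1)∏_{r=2h+2}^{2g+2}(t²u − a_r) − v²`, in the
region `{|t| ≤ δ}` the critical zeros form exactly the line `{(0,u,0)}` when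
`m ≥ 1`, and there are none when `m = 0`. -/
theorem stmt_8 (h g m : ℕ) (hh : 1 ≤ h) (hhg : 2 * h ≤ g)
    (δ : ℝ) (hδ : 0 < δ) (a : ℕ → ℂ)
    (ha_inj : Set.InjOn a ↑(Finset.Icc (2 * h + 2) (2 * g + 2)))
    (ha_abs : ∀ r ∈ Finset.Icc (2 * h + 2) (2 * g + 2), δ ^ 2 < ‖a r‖)
    (Q : ℂ → ℂ → ℂ → ℂ)
    (hQ : ∀ t u v, Q t u v =
      t ^ (2 * m) * (u ^ (2 * h + 1) - 1) *
        (∏ r ∈ Finset.Icc (2 * h + 2) (2 * g + 2), (t ^ 2 * u - a r)) - v ^ 2) :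
    (1 ≤ m → ∀ t u v : ℂ,
      (‖t‖ ≤ δ ∧ Q t u v = 0 ∧ deriv (fun t' => Q t' u v) t = 0 ∧
        deriv (fun u' => Q t u' v) u = 0 ∧ deriv (fun v' => Q t u v') v = 0) ↔
      (t = 0 ∧ v = 0)) ∧
    (m = 0 → ∀ t u v : ℂ, ‖t‖ ≤ δ →
      ¬(Q t u v = 0 ∧ deriv (fun t' => Q t' u v) t = 0 ∧
        deriv (fun u' => Q t u' v) u = 0 ∧ deriv (fun v' => Q t u v') v = 0)) :=
  stmt_8_general h g m δ hδ a ha_inj ha_abs Q hQ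
end

section
/- Let g ≥ 1 be an integer and let c be a complex number with c ≠ 0 and |c| ≠ 1. Define the homogeneous polynomial F(x,y,z) = (x² − c·z²)·(x^{2g} − z^{2g}) − y²·z^{2g} on ℂ³. Then the set of points (x,y,z) ≠ (0,0,0) at which F and all three partial derivatives ∂F/∂x, ∂F/∂y, ∂F/∂z vanish is exactly {(0, y, 0) : y ∈ ℂ, y ≠ 0}. (Equivalently: the projective plane curve {(x:y:z) ∈ ℂP² : (x² − c z²)(x^{2g} − z^{2g}) = y² z^{2g}} has exactly one singular point, namely (0:1:0); in particular its affine part in the chart z = 1 is a smooth curve.) -/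
/-!
Write `n = 2g`. On `z = 0` the polynomial reduces to `x ^ (n + 2)`, so a critical zero there has `x = 0`.
Off `z = 0`, `∂F/∂y = -2 y zⁿ` forces `y = 0`; then `F = 0` says `x² = c z²` or `xⁿ = zⁿ`,
and `∂F/∂x = 0` upgrades either one to both. But `xⁿ = zⁿ` gives `‖x‖ = ‖z‖`, and then
`x² = c z²` gives `‖c‖ = 1`.
-/

def fiberPoly {R : Type*} [CommRing R] (n : ℕ) (c x y z : R) : R :=
  (x ^ 2 - c * z ^ 2) * (x ^ n - z ^ n) - y ^ 2 * z ^ n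

section Derivatives

variable {𝕜 : Type*} [NontriviallyNormedField 𝕜] (n : ℕ) (c x y z : 𝕜)

theorem hasDerivAt_fiberPoly_fst :
    HasDerivAt (fun x' => fiberPoly n c x' y z)
      (2 * x * (x ^ n - z ^ n) + (x ^ 2 - c * z ^ 2) * (n * x ^ (n - 1))) x := by
  have h := (((hasDerivAt_pow 2 x).sub_const (c * z ^ 2)).mul
    ((hasDerivAt_pow n x).sub_const (z ^ n))).sub_const (y ^ 2 * z ^ n)
  exact h.congr_deriv (by push_cast; ring)

theorem hasDerivAt_fiberPoly_snd :
    HasDerivAt (fun y' => fiberPoly n c x y' z) (-(2 * y * z ^ n)) y := by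
  have h := ((hasDerivAt_pow 2 y).mul_const (z ^ n)).const_sub
    ((x ^ 2 - c * z ^ 2) * (x ^ n - z ^ n))
  exact h.congr_deriv (by push_cast; ring)

theorem hasDerivAt_fiberPoly_thd :
    HasDerivAt (fun z' => fiberPoly n c x y z')
      (-(2 * c * z * (x ^ n - z ^ n)) - (x ^ 2 - c * z ^ 2) * (n * z ^ (n - 1))
        - y ^ 2 * (n * z ^ (n - 1))) z := by
  have h := ((((hasDerivAt_pow 2 z).const_mul c).const_sub (x ^ 2)).mul
    ((hasDerivAt_pow n z).const_sub (x ^ n))).sub ((hasDerivAt_pow n z).const_mul (y ^ 2))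
  exact h.congr_deriv (by push_cast; ring)

end Derivatives

theorem norm_eq_one_of_sq_eq_mul_sq_of_pow_eq {𝕜 : Type*} [NormedDivisionRing 𝕜] {c x z : 𝕜}
    {n : ℕ} (hn : n ≠ 0) (hz : z ≠ 0) (hsq : x ^ 2 = c * z ^ 2) (hpow : x ^ n = z ^ n) :
    ‖c‖ = 1 := by
  have hxz : ‖x‖ = ‖z‖ :=
    (pow_left_inj₀ (norm_nonneg x) (norm_nonneg z) hn).mp (by rw [← norm_pow, ← norm_pow, hpow])
  have h : ‖c‖ * ‖z‖ ^ 2 = ‖z‖ ^ 2 := calc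
    ‖c‖ * ‖z‖ ^ 2 = ‖x ^ 2‖ := by rw [hsq, norm_mul, norm_pow]
    _ = ‖z‖ ^ 2 := by rw [norm_pow, hxz]
  exact (mul_eq_right₀ (pow_ne_zero 2 (norm_ne_zero_iff.mpr hz))).mp h

theorem eq_zero_of_fiberPoly_critical {𝕜 : Type*} [NormedField 𝕜] [CharZero 𝕜] {n : ℕ}
    {c x y z : 𝕜} (hn : n ≠ 0) (hc : c ≠ 0) (hc1 : ‖c‖ ≠ 1) (hF : fiberPoly n c x y z = 0)
    (hFx : 2 * x * (x ^ n - z ^ n) + (x ^ 2 - c * z ^ 2) * (n * x ^ (n - 1)) = 0)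
    (hFy : -(2 * y * z ^ n) = 0) : z = 0 := by
  by_contra hz
  obtain rfl : y = 0 := by simpa [hz] using hFy
  have hAB : (x ^ 2 - c * z ^ 2) * (x ^ n - z ^ n) = 0 := by simpa [fiberPoly] using hF
  have hx : x ≠ 0 := by
    rintro rfl
    simp [hc, hz, hn] at hAB
  have hboth : x ^ 2 - c * z ^ 2 = 0 ∧ x ^ n - z ^ n = 0 := by
    rcases mul_eq_zero.mp hAB with hA | hB
    · exact ⟨hA, by simpa [hA, hx] using hFx⟩
    · exact ⟨by simpa [hB, hx, hn] using hFx, hB⟩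
  exact hc1 (norm_eq_one_of_sq_eq_mul_sq_of_pow_eq hn hz
    (sub_eq_zero.mp hboth.1) (sub_eq_zero.mp hboth.2))

/-- Each fiber of the twisted local model, the projective plane curve
`(x² − c z²)(x^{2g} − z^{2g}) = y² z^{2g}` with `c ≠ 0`, `|c| ≠ 1`, has exactly
one singular point, namely `(0:1:0)`: the critical zeros of the defining
homogeneous polynomial away from the origin are exactly `(0,y,0)`, `y ≠ 0`. -/
theorem stmt_9 (g : ℕ) (hg : 1 ≤ g) (c : ℂ) (hc : c ≠ 0)
    (hc1 : ‖c‖ ≠ 1)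
    (F : ℂ → ℂ → ℂ → ℂ)
    (hF : ∀ x y z, F x y z =
      (x ^ 2 - c * z ^ 2) * (x ^ (2 * g) - z ^ (2 * g)) - y ^ 2 * z ^ (2 * g)) :
    ∀ x y z : ℂ,
      (¬(x = 0 ∧ y = 0 ∧ z = 0) ∧ F x y z = 0 ∧
        deriv (fun x' => F x' y z) x = 0 ∧ deriv (fun y' => F x y' z) y = 0 ∧
        deriv (fun z' => F x y z') z = 0) ↔ (x = 0 ∧ z = 0 ∧ y ≠ 0) := by
  have hn : 2 * g ≠ 0 := by omega
  have hn1 : 2 * g - 1 ≠ 0 := by omega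
  obtain rfl : F = fiberPoly (2 * g) c := funext fun x => funext fun y => funext (hF x y)
  intro x y z
  rw [(hasDerivAt_fiberPoly_fst _ c x y z).deriv, (hasDerivAt_fiberPoly_snd _ c x y z).deriv,
    (hasDerivAt_fiberPoly_thd _ c x y z).deriv]
  constructor
  · rintro ⟨hne, h0, hFx, hFy, -⟩
    obtain rfl := eq_zero_of_fiberPoly_critical hn hc hc1 h0 hFx hFy
    obtain rfl : x = 0 := by simpa [fiberPoly, hn] using h0
    exact ⟨rfl, rfl, fun hy => hne ⟨rfl, hy, rfl⟩⟩
  · rintro ⟨rfl, rfl, hy⟩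
    simp [fiberPoly, hy, hn, hn1]
end

section
/- Let K > 0 be a real number and let ω : ℂ² × ℂ² → ℝ be an ℝ-bilinear alternating form such that ω(w, i·w) > 0 for every nonzero w ∈ ℂ². Let g : ℝ × ℂ² → ℂ be continuously differentiable (as a map of real manifolds) such that for each fixed t ∈ ℝ the map w ↦ g(t,w) is holomorphic on ℂ². Define G : ℝ × ℝ × ℂ² → ℂ by G(t,θ,w) = g(t,w), and define the alternating ℝ-bilinear form Ω on the real vector space V = ℝ × ℝ × ℂ² by Ω((a₁,b₁,w₁),(a₂,b₂,w₂)) = K·(a₁b₂ − a₂b₁) + ω(w₁,w₂). Suppose p = (t₀,θ₀,w₀) ∈ V satisfies g(t₀,w₀) = 0 and the complex derivative of w ↦ g(t₀,w) at w₀ is nonzero (as a ℂ-linear map ℂ² → ℂ). Then the kernel of the real Fréchet derivative of G at p is a 4-dimensional real subspace of V, and the restriction of Ω to this kernel is a nondegenerate bilinear form. -/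
/-! The real derivative of `G` at `p` is `(a, b, u) ↦ a τ + D u`, where `τ = ∂g/∂t` and `D` is the
complex derivative of `g(t₀, ·)`. Since `D ≠ 0` it is onto `ℂ`, so its kernel has real dimension
`6 - 2`. Let `x = (a, b, w)` in the kernel be `Ω`-orthogonal to it. Pairing with `∂/∂θ = (0, 1, 0)`
gives `a = 0`; then `D w = 0`, so `(0, 0, i w)` lies in the kernel, and pairing with it gives
`ω(w, i w) = 0`, hence `w = 0`. Pairing with a lift `(1, 0, u)` of `∂/∂t`, `D u = -τ`, gives `b = 0`. -/

open Complex

section Kernel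

variable {V : Type*} [AddCommGroup V] [Module ℝ V] [FiniteDimensional ℝ V]

theorem finrank_ker_add_two_of_surjective {Λ : V →ₗ[ℝ] ℂ} (hΛ : Function.Surjective Λ) :
    Module.finrank ℝ (LinearMap.ker Λ) + 2 = Module.finrank ℝ V := by
  have h := Λ.finrank_range_add_finrank_ker
  rw [LinearMap.range_eq_top.mpr hΛ, finrank_top, Complex.finrank_real_complex] at h
  omega

end Kernel

section Symplectic

variable {E : Type*} [AddCommGroup E] [Module ℂ E] [Module ℝ E]

theorem surjective_of_apply_eq_smul_add {D : E →ₗ[ℂ] ℂ} (hD : D ≠ 0) {τ : ℂ}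
    {Λ : ℝ × ℝ × E →ₗ[ℝ] ℂ} (hΛ : ∀ a b u, Λ (a, b, u) = a • τ + D u) :
    Function.Surjective Λ := by
  intro c
  obtain ⟨u, hu⟩ := LinearMap.surjective_of_ne_zero hD c
  exact ⟨(0, 0, u), by simp [hΛ, hu]⟩

theorem eq_zero_of_mem_ker_of_orthogonal_ker {K : ℝ} (hK : 0 < K) {ω : E →ₗ[ℝ] E →ₗ[ℝ] ℝ}
    (hω : ∀ w : E, w ≠ 0 → 0 < ω w (I • w)) {D : E →ₗ[ℂ] ℂ} (hD : D ≠ 0) {τ : ℂ}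
    {Λ : ℝ × ℝ × E →ₗ[ℝ] ℂ} (hΛ : ∀ a b u, Λ (a, b, u) = a • τ + D u)
    {x : ℝ × ℝ × E} (hx : x ∈ LinearMap.ker Λ)
    (hperp : ∀ y ∈ LinearMap.ker Λ, K * (x.1 * y.2.1 - y.1 * x.2.1) + ω x.2.2 y.2.2 = 0) :
    x = 0 := by
  obtain ⟨a, b, w⟩ := x
  simp only [LinearMap.mem_ker, hΛ] at hx hperp
  have ha : a = 0 := by
    simpa [hK.ne'] using hperp (0, 1, 0) (by simp)
  subst ha
  have hDw : D w = 0 := by simpa using hx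
  have hw : w = 0 := by
    by_contra hw
    have := hperp (0, 0, I • w) (by simp [hDw])
    simp only [mul_zero, sub_self, zero_mul, zero_add] at this
    exact (hω w hw).ne' this
  subst hw
  obtain ⟨u, hu⟩ := LinearMap.surjective_of_ne_zero hD (-τ)
  have hb : b = 0 := by
    simpa [hK.ne'] using hperp (1, 0, u) (by simp [hu])
  simp [hb]

end Symplectic

section Derivatives

variable {𝕜 : Type*} [NontriviallyNormedField 𝕜]
  {X Y Z W : Type*} [NormedAddCommGroup X] [NormedSpace 𝕜 X] [NormedAddCommGroup Y]
  [NormedSpace 𝕜 Y] [NormedAddCommGroup Z] [NormedSpace 𝕜 Z] [NormedAddCommGroup W]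
  [NormedSpace 𝕜 W]

theorem fderiv_apply_of_forall_eq_drop_middle {F : X × Z → W} {G : X × Y × Z → W}
    (hG : ∀ t θ w, G (t, θ, w) = F (t, w)) {t : X} {θ : Y} {w : Z}
    (hF : DifferentiableAt 𝕜 F (t, w)) (a : X) (b : Y) (u : Z) :
    fderiv 𝕜 G (t, θ, w) (a, b, u) = fderiv 𝕜 F (t, w) (a, u) := by
  set L : X × Y × Z →L[𝕜] X × Z :=
    (ContinuousLinearMap.fst 𝕜 X (Y × Z)).prod
      ((ContinuousLinearMap.snd 𝕜 Y Z).comp (ContinuousLinearMap.snd 𝕜 X (Y × Z)))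
  have hGF : G = F ∘ L := funext fun ⟨t, θ, w⟩ => hG t θ w
  rw [hGF, (hF.hasFDerivAt.comp (t, θ, w) L.hasFDerivAt).fderiv]
  rfl

end Derivatives

section Holomorphic

variable {E : Type*} [NormedAddCommGroup E] [NormedSpace ℂ E]

theorem fderiv_uncurry_apply_of_differentiableAt {g : ℝ → E → ℂ} {t : ℝ} {w : E}
    (hg : DifferentiableAt ℝ (fun p : ℝ × E => g p.1 p.2) (t, w))
    (hgt : DifferentiableAt ℂ (g t) w) (a : ℝ) (u : E) :
    fderiv ℝ (fun p : ℝ × E => g p.1 p.2) (t, w) (a, u) =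
      a • fderiv ℝ (fun p : ℝ × E => g p.1 p.2) (t, w) (1, 0) + fderiv ℂ (g t) w u := by
  set A := fderiv ℝ (fun p : ℝ × E => g p.1 p.2) (t, w)
  have hslice : HasFDerivAt (g t) (A.comp (ContinuousLinearMap.inr ℝ ℝ E)) w :=
    hg.hasFDerivAt.comp w ((hasFDerivAt_const t w).prodMk (hasFDerivAt_id w))
  have hpartial : A.comp (ContinuousLinearMap.inr ℝ ℝ E) = (fderiv ℂ (g t) w).restrictScalars ℝ :=
    hslice.unique (hgt.hasFDerivAt.restrictScalars ℝ)
  have hsplit : ((a, u) : ℝ × E) = a • ((1 : ℝ), (0 : E)) + (0, u) := by simp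
  rw [hsplit, map_add, map_smul]
  congr 1
  exact congrArg (fun f : E →L[ℝ] ℂ => f u) hpartial

end Holomorphic

theorem stmt_10_general (K : ℝ) (hK : 0 < K)
    (ω : (ℂ × ℂ) →ₗ[ℝ] (ℂ × ℂ) →ₗ[ℝ] ℝ)
    (hω_tame : ∀ w : ℂ × ℂ, w ≠ 0 → 0 < ω w (Complex.I • w))
    (g : ℝ → (ℂ × ℂ) → ℂ)
    (hg_C1 : ContDiff ℝ 1 (fun p : ℝ × (ℂ × ℂ) => g p.1 p.2))
    (hg_hol : ∀ t : ℝ, Differentiable ℂ (g t))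
    (G : ℝ × ℝ × (ℂ × ℂ) → ℂ)
    (hG : ∀ (t θ : ℝ) (w : ℂ × ℂ), G (t, θ, w) = g t w)
    (Ω : (ℝ × ℝ × (ℂ × ℂ)) → (ℝ × ℝ × (ℂ × ℂ)) → ℝ)
    (hΩ : ∀ (a₁ b₁ : ℝ) (w₁ : ℂ × ℂ) (a₂ b₂ : ℝ) (w₂ : ℂ × ℂ),
      Ω (a₁, b₁, w₁) (a₂, b₂, w₂) = K * (a₁ * b₂ - a₂ * b₁) + ω w₁ w₂)
    (t₀ θ₀ : ℝ) (w₀ : ℂ × ℂ)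
    (hreg : fderiv ℂ (g t₀) w₀ ≠ 0) :
    Module.finrank ℝ (LinearMap.ker (fderiv ℝ G (t₀, θ₀, w₀) : ℝ × ℝ × (ℂ × ℂ) →ₗ[ℝ] ℂ)) = 4 ∧
      ∀ x ∈ LinearMap.ker (fderiv ℝ G (t₀, θ₀, w₀) : ℝ × ℝ × (ℂ × ℂ) →ₗ[ℝ] ℂ),
        (∀ y ∈ LinearMap.ker (fderiv ℝ G (t₀, θ₀, w₀) : ℝ × ℝ × (ℂ × ℂ) →ₗ[ℝ] ℂ), Ω x y = 0) → x = 0 := by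
  set Λ := (fderiv ℝ G (t₀, θ₀, w₀) : ℝ × ℝ × (ℂ × ℂ) →ₗ[ℝ] ℂ)
  set D := (fderiv ℂ (g t₀) w₀ : ℂ × ℂ →ₗ[ℂ] ℂ)
  have hD : D ≠ 0 := fun h => hreg (ContinuousLinearMap.coe_injective h)
  have hg_diff := (hg_C1.differentiable one_ne_zero) (t₀, w₀)
  have hΛ : ∀ a b u, Λ (a, b, u) =
      a • fderiv ℝ (fun p : ℝ × (ℂ × ℂ) => g p.1 p.2) (t₀, w₀) (1, 0) + D u := fun a b u => by
    simp only [Λ, D, ContinuousLinearMap.coe_coe]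
    rw [fderiv_apply_of_forall_eq_drop_middle hG hg_diff,
      fderiv_uncurry_apply_of_differentiableAt hg_diff (hg_hol t₀ w₀)]
  refine ⟨?_, fun x hx hperp => eq_zero_of_mem_ker_of_orthogonal_ker hK hω_tame hD hΛ hx ?_⟩
  · have h := finrank_ker_add_two_of_surjective (surjective_of_apply_eq_smul_add hD hΛ)
    simp only [Module.finrank_prod, Module.finrank_self, Complex.finrank_real_complex] at h
    omega
  · intro y hy
    rw [← hΩ]
    exact hperp y hy

/-- Analytic core of Lemma 4.2: if `g(t,w)` is `C¹` in `(t,w)`, holomorphic in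
`w ∈ ℂ²` for each fixed `t`, and `G(t,θ,w) = g(t,w)` is independent of `θ`,
then at a point where `g = 0` and the complex derivative in `w` is nonzero,
the kernel of the real derivative of `G` is a `4`-dimensional real subspace on
which the form `Ω = K dt∧dθ + ω` restricts nondegenerately, where `ω` is an
alternating ℝ-bilinear form on `ℂ²` taming the complex structure and `K > 0`. -/
theorem stmt_10 (K : ℝ) (hK : 0 < K)
    (ω : (ℂ × ℂ) →ₗ[ℝ] (ℂ × ℂ) →ₗ[ℝ] ℝ)
    (hω_alt : ∀ w : ℂ × ℂ, ω w w = 0)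
    (hω_tame : ∀ w : ℂ × ℂ, w ≠ 0 → 0 < ω w (Complex.I • w))
    (g : ℝ → (ℂ × ℂ) → ℂ)
    (hg_C1 : ContDiff ℝ 1 (fun p : ℝ × (ℂ × ℂ) => g p.1 p.2))
    (hg_hol : ∀ t : ℝ, Differentiable ℂ (g t))
    (G : ℝ × ℝ × (ℂ × ℂ) → ℂ)
    (hG : ∀ (t θ : ℝ) (w : ℂ × ℂ), G (t, θ, w) = g t w)
    (Ω : (ℝ × ℝ × (ℂ × ℂ)) → (ℝ × ℝ × (ℂ × ℂ)) → ℝ)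
    (hΩ : ∀ (a₁ b₁ : ℝ) (w₁ : ℂ × ℂ) (a₂ b₂ : ℝ) (w₂ : ℂ × ℂ),
      Ω (a₁, b₁, w₁) (a₂, b₂, w₂) = K * (a₁ * b₂ - a₂ * b₁) + ω w₁ w₂)
    (t₀ θ₀ : ℝ) (w₀ : ℂ × ℂ)
    (hzero : g t₀ w₀ = 0)
    (hreg : fderiv ℂ (g t₀) w₀ ≠ 0) :
    Module.finrank ℝ (LinearMap.ker (fderiv ℝ G (t₀, θ₀, w₀) : ℝ × ℝ × (ℂ × ℂ) →ₗ[ℝ] ℂ)) = 4 ∧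
      ∀ x ∈ LinearMap.ker (fderiv ℝ G (t₀, θ₀, w₀) : ℝ × ℝ × (ℂ × ℂ) →ₗ[ℝ] ℂ),
        (∀ y ∈ LinearMap.ker (fderiv ℝ G (t₀, θ₀, w₀) : ℝ × ℝ × (ℂ × ℂ) →ₗ[ℝ] ℂ), Ω x y = 0) → x = 0 :=
  stmt_10_general K hK ω hω_tame g hg_C1 hg_hol G hG Ω hΩ t₀ θ₀ w₀ hreg
end

section
/- Let g be a positive integer and define A : ℝ → Matrix (Fin 3) (Fin 3) ℂ by letting A(θ) be the diagonal matrix with diagonal entries exp(−2πiθ), exp(−(2g+2)πiθ), 1. Then the following are equivalent: (i) there exist a continuous map B : ℝ → Matrix (Fin 3) (Fin 3) ℂ and a function λ : ℝ → ℂ such that for every θ ∈ ℝ, B(θ) = λ(θ)·A(θ), B(θ) is unitary with det B(θ) = 1, and B(θ + 1) = B(θ); (ii) g ≡ 1 (mod 3). -/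
/-!
If `B = λ • A` is such a lift, then `λ = B₂₂` is continuous and `1`-periodic, and `det B = 1`
forces `λ(θ)³ = e^{2πi(g+2)θ}`. Dividing `λ` by the continuous cube root `e^{2πi(g+2)θ/3}`
leaves a continuous cube root of unity, which is constant on `ℝ`; comparing `θ = 0` with `θ = 1`
gives `e^{2πi(g+2)/3} = 1`, i.e. `3 ∣ g + 2`. Conversely, if `g + 2 = 3m`, then
`λ(θ) = e^{2πimθ}` turns `A` into a diagonal matrix of loops `e^{2πikθ}` whose integer
frequencies sum to `0`.
-/

open scoped Real

theorem Continuous.eq_of_pow_eq_one {X R : Type*} [TopologicalSpace X] [PreconnectedSpace X]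
    [CommRing R] [IsDomain R] [TopologicalSpace R] [T1Space R] {n : ℕ} (hn : n ≠ 0)
    {f : X → R} (hf : Continuous f) (hpow : ∀ x, f x ^ n = 1) (x y : X) : f x = f y := by
  have : Finite {z : R | z ^ n = 1} := by
    refine Set.Finite.to_subtype ((Polynomial.nthRootsFinset n (1 : R)).finite_toSet.subset ?_)
    intro z hz
    exact (Polynomial.mem_nthRootsFinset (Nat.pos_of_ne_zero hn) 1).2 hz
  exact congrArg Subtype.val <| PreconnectedSpace.constant ‹_›
    (f := fun x => (⟨f x, hpow x⟩ : {z : R | z ^ n = 1})) (hf.subtype_mk _) (x := x) (y := y)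

noncomputable def expLoop (k : ℤ) (θ : ℝ) : ℂ := Complex.exp (2 * π * Complex.I * k * θ)

theorem continuous_expLoop (k : ℤ) : Continuous (expLoop k) := by
  unfold expLoop; fun_prop

theorem expLoop_periodic (k : ℤ) : Function.Periodic (expLoop k) 1 := by
  intro θ
  rw [expLoop, expLoop, Complex.ofReal_add, Complex.ofReal_one, mul_add, mul_one,
    Complex.exp_add, mul_comm _ (k : ℂ), Complex.exp_int_mul_two_pi_mul_I, mul_one]

theorem expLoop_zero (θ : ℝ) : expLoop 0 θ = 1 := by simp [expLoop]

theorem expLoop_add (k l : ℤ) (θ : ℝ) : expLoop (k + l) θ = expLoop k θ * expLoop l θ := by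
  rw [expLoop, expLoop, expLoop, ← Complex.exp_add]; push_cast; ring_nf

theorem star_expLoop_mul_self (k : ℤ) (θ : ℝ) : star (expLoop k θ) * expLoop k θ = 1 := by
  rw [Complex.star_def, expLoop, ← Complex.exp_conj, ← Complex.exp_add]
  simp [map_ofNat]

theorem dvd_of_continuous_periodic_pow_eq_expLoop {n : ℕ} (hn : n ≠ 0) {k : ℤ} {lam : ℝ → ℂ}
    (hc : Continuous lam) (hper : Function.Periodic lam 1)
    (hpow : ∀ θ, lam θ ^ n = expLoop k θ) : (n : ℤ) ∣ k := by
  have hn' : (n : ℂ) ≠ 0 := Nat.cast_ne_zero.2 hn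
  set c : ℂ := 2 * π * Complex.I * k / n
  have hroot : ∀ θ : ℝ, (lam θ * Complex.exp (-(c * θ))) ^ n = 1 := by
    intro θ
    rw [mul_pow, hpow, expLoop, ← Complex.exp_nat_mul, ← Complex.exp_add]
    convert Complex.exp_zero using 2
    simp only [c]
    field_simp
    ring
  have hconst := (hc.mul (by fun_prop)).eq_of_pow_eq_one hn hroot 1 0
  have hlam1 : lam 1 ≠ 0 := fun h0 => by
    simpa [h0, hn, expLoop, eq_comm (a := (0 : ℂ))] using hpow 1
  have hexp : Complex.exp (-c) = 1 := by
    simpa [← hper 0, hlam1] using hconst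
  obtain ⟨m, hm⟩ := Complex.exp_eq_one_iff.1 hexp
  simp only [c] at hm
  field_simp at hm
  exact ⟨-m, by exact_mod_cast (by linear_combination -hm : (k : ℂ) = n * -m)⟩

noncomputable def expDiag {ι : Type*} [DecidableEq ι] (d : ι → ℤ) (θ : ℝ) : Matrix ι ι ℂ :=
  Matrix.diagonal fun i => expLoop (d i) θ

section expDiag

variable {ι : Type*} [DecidableEq ι]

theorem continuous_expDiag (d : ι → ℤ) : Continuous (expDiag d) :=
  Continuous.matrix_diagonal (continuous_pi fun i => continuous_expLoop (d i))

theorem expDiag_periodic (d : ι → ℤ) : Function.Periodic (expDiag d) 1 := fun θ => by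
  simp only [expDiag, expLoop_periodic _ θ]

theorem expLoop_smul_expDiag (m : ℤ) (d : ι → ℤ) (θ : ℝ) :
    expLoop m θ • expDiag d θ = expDiag (fun i => m + d i) θ := by
  simp only [expDiag, ← Matrix.diagonal_smul, expLoop_add]
  rfl

theorem expDiag_mem_unitaryGroup [Fintype ι] (d : ι → ℤ) (θ : ℝ) :
    expDiag d θ ∈ Matrix.unitaryGroup ι ℂ := by
  rw [Matrix.mem_unitaryGroup_iff', expDiag, Matrix.star_eq_conjTranspose,
    Matrix.diagonal_conjTranspose, Matrix.diagonal_mul_diagonal, ← Matrix.diagonal_one]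
  exact congrArg Matrix.diagonal (funext fun i => star_expLoop_mul_self (d i) θ)

theorem det_expDiag [Fintype ι] (d : ι → ℤ) (θ : ℝ) :
    (expDiag d θ).det = expLoop (∑ i, d i) θ := by
  rw [expDiag, Matrix.det_diagonal]
  induction (Finset.univ : Finset ι) using Finset.induction_on with
  | empty => simp [expLoop_zero]
  | insert i s hi ih => rw [Finset.prod_insert hi, Finset.sum_insert hi, ih, expLoop_add]

theorem pow_card_eq_expLoop_of_det_smul_expDiag_eq_one [Fintype ι]
    {c : ℂ} {d : ι → ℤ} {θ : ℝ} (h : (c • expDiag d θ).det = 1) :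
    c ^ Fintype.card ι = expLoop (-∑ i, d i) θ := by
  rw [Matrix.det_smul, det_expDiag] at h
  calc c ^ Fintype.card ι
      = c ^ Fintype.card ι * expLoop (∑ i, d i + -∑ i, d i) θ := by simp [expLoop_zero]
    _ = expLoop (-∑ i, d i) θ := by rw [expLoop_add, ← mul_assoc, h, one_mul]

end expDiag

theorem stmt_11_general (g : ℕ)
    (A : ℝ → Matrix (Fin 3) (Fin 3) ℂ)
    (hA : ∀ θ : ℝ, A θ = Matrix.diagonal
      ![Complex.exp (-2 * π * Complex.I * θ),
        Complex.exp (-(2 * (g : ℂ) + 2) * π * Complex.I * θ), 1]) :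
    (∃ (B : ℝ → Matrix (Fin 3) (Fin 3) ℂ) (lam : ℝ → ℂ), Continuous B ∧
      ∀ θ : ℝ, B θ = lam θ • A θ ∧
        B θ ∈ Matrix.unitaryGroup (Fin 3) ℂ ∧ (B θ).det = 1 ∧
        B (θ + 1) = B θ) ↔ g % 3 = 1 := by
  set d : Fin 3 → ℤ := ![-1, -((g : ℤ) + 1), 0]
  have hAd : A = expDiag d := by
    funext θ
    rw [hA, expDiag]
    congr 1
    funext i
    fin_cases i <;> simp [d, expLoop]
    ring_nf
  have hsum : ∑ i, d i = -((g : ℤ) + 2) := by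
    simp [d, Fin.sum_univ_three]
    ring
  subst hAd
  constructor
  · rintro ⟨B, lam, hBc, hB⟩
    have hlam : lam = fun θ => B θ 2 2 := funext fun θ => by
      simp [(hB θ).1, expDiag, d, expLoop_zero]
    have hcube : ∀ θ, lam θ ^ 3 = expLoop (g + 2) θ := fun θ => by
      have := pow_card_eq_expLoop_of_det_smul_expDiag_eq_one ((hB θ).1 ▸ (hB θ).2.2.1)
      rwa [Fintype.card_fin, hsum, neg_neg] at this
    have hdvd := dvd_of_continuous_periodic_pow_eq_expLoop three_ne_zero
      (hlam ▸ hBc.matrix_elem 2 2) (fun θ => by simp [hlam, (hB θ).2.2.2]) hcube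
    omega
  · intro hg3
    obtain ⟨m, hm⟩ : ∃ m : ℤ, (g : ℤ) + 2 = 3 * m := ⟨(g + 2) / 3, by omega⟩
    refine ⟨fun θ => expLoop m θ • expDiag d θ, expLoop m, ?_, fun θ => ⟨rfl, ?_, ?_, ?_⟩⟩ <;>
      simp only [expLoop_smul_expDiag]
    · exact continuous_expDiag _
    · exact expDiag_mem_unitaryGroup _ θ
    · simp [det_expDiag, Finset.sum_add_distrib, hsum, ← hm, expLoop_zero]
    · exact expDiag_periodic _ θ

/-- The clutching loop `θ ↦ [A(θ)] ∈ PSU(3)`, with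
`A(θ) = diag(e^{−2πiθ}, e^{−(2g+2)πiθ}, 1)`, lifts to a loop in `SU(3)` —
i.e. there is a continuous `1`-periodic family `B(θ)` of special unitary
matrices with `B(θ) = λ(θ)·A(θ)` — if and only if `g ≡ 1 (mod 3)`. -/
theorem stmt_11 (g : ℕ) (hg : 1 ≤ g)
    (A : ℝ → Matrix (Fin 3) (Fin 3) ℂ)
    (hA : ∀ θ : ℝ, A θ = Matrix.diagonal
      ![Complex.exp (-2 * π * Complex.I * θ),
        Complex.exp (-(2 * (g : ℂ) + 2) * π * Complex.I * θ), 1]) :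
    (∃ (B : ℝ → Matrix (Fin 3) (Fin 3) ℂ) (lam : ℝ → ℂ), Continuous B ∧
      ∀ θ : ℝ, B θ = lam θ • A θ ∧
        B θ ∈ Matrix.unitaryGroup (Fin 3) ℂ ∧ (B θ).det = 1 ∧
        B (θ + 1) = B θ) ↔ g % 3 = 1 :=
  stmt_11_general g A hA
end
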